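/- Let p ≥ 5, n ≥ 2, r ≥ 2, and suppose s : GL_r(ℤ/p) → GL_r(ℤ/p^n) is any function (not assumed a homomorphism) with reduction ∘ s = id that maps the transvection T = I + E_{1r} to an element of order p. Then no such s exists; equivalently, no preimage of T under reduction has order p. -/

import Mathlib

/-- Let `p ≥ 5`, `n ≥ 2`, `r ≥ 2` and `T = I + E_{1r} ∈ GL_r(ℤ/p)` the transvection of order
`p`.  No preimage of `T` under the entrywise reduction `GL_r(ℤ/pⁿ) → GL_r(ℤ/p)` has order `p`;
in particular no section (even a mere set-theoretic one) of the reduction can send `T` to an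
element of order `p`. -/
theorem stmt17 (p n r : ℕ) (hp : p.Prime) (hp5 : 5 ≤ p) (hn : 2 ≤ n) (hr : 2 ≤ r)
    (A : GL (Fin r) (ZMod (p ^ n)))
    (hA : (ZMod.castHom (dvd_pow_self p (by omega)) (ZMod p)).mapMatrix
        (A : Matrix (Fin r) (Fin r) (ZMod (p ^ n))) =
      1 + Matrix.single (⟨0, by omega⟩ : Fin r) (⟨r - 1, by omega⟩ : Fin r)
        (1 : ZMod p)) :
    orderOf A ≠ p := by
  intro horder
  have hp0 : p ≠ 0 := hp.ne_zero
  haveI : NeZero (p ^ 2) := ⟨pow_ne_zero 2 hp0⟩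
  -- ring homs
  set f : ZMod (p ^ n) →+* ZMod (p ^ 2) := ZMod.castHom (pow_dvd_pow p hn) (ZMod (p ^ 2))
  set q : ZMod (p ^ 2) →+* ZMod p := ZMod.castHom (dvd_pow_self p two_ne_zero) (ZMod p)
  -- kernel lemma
  have hker : ∀ x : ZMod (p ^ 2), q x = 0 → ∃ a : ZMod (p ^ 2), x = (p : ZMod (p ^ 2)) * a := by
    intro x hx
    have h1 : ((x.val : ℕ) : ZMod p) = 0 := by
      rw [ZMod.castHom_apply] at hx
      rw [ZMod.natCast_val]
      exact hx
    obtain ⟨c, hc⟩ := (ZMod.natCast_eq_zero_iff _ _).mp h1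
    refine ⟨(c : ZMod (p ^ 2)), ?_⟩
    have hxval : ((x.val : ℕ) : ZMod (p ^ 2)) = x := by
      rw [ZMod.natCast_val, ZMod.cast_id]
    rw [← hxval, hc]
    push_cast
    ring
  have hpp : (p : ZMod (p ^ 2)) * (p : ZMod (p ^ 2)) = 0 := by
    have : ((p ^ 2 : ℕ) : ZMod (p ^ 2)) = 0 := ZMod.natCast_self _
    push_cast at this
    linear_combination this
  -- matrices
  set B : Matrix (Fin r) (Fin r) (ZMod (p ^ 2)) :=
    f.mapMatrix (A : Matrix (Fin r) (Fin r) (ZMod (p ^ n))) with hB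
  set M : Matrix (Fin r) (Fin r) (ZMod (p ^ 2)) := B - 1 with hM
  set i0 : Fin r := ⟨0, by omega⟩
  set ir : Fin r := ⟨r - 1, by omega⟩
  set E : Matrix (Fin r) (Fin r) (ZMod p) := Matrix.single i0 ir (1 : ZMod p)
  -- reduction of B
  have hqB : q.mapMatrix B = 1 + E := by
    rw [hB, ← RingHom.comp_apply, RingHom.mapMatrix_comp, ZMod.castHom_comp]
    exact hA
  have hqM : q.mapMatrix M = E := by
    rw [hM]
    simp only [map_sub, map_one, hqB]
    abel
  -- E * E = 0 in ZMod p, since ir ≠ i0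
  have hir : ir ≠ i0 := by
    simp only [i0, ir, Fin.mk.injEq, ne_eq]
    omega
  have hEE : E * E = 0 := by
    exact Matrix.single_mul_single_of_ne (h := hir) ..
  -- M^k has reduction 0 for k ≥ 2
  have hqMk : ∀ k, 2 ≤ k → q.mapMatrix (M ^ k) = 0 := by
    intro k hk
    rw [map_pow, hqM]
    obtain ⟨m, rfl⟩ := Nat.exists_eq_add_of_le hk
    rw [pow_add, pow_two, hEE, zero_mul]
  -- product of two kernel matrices is zero
  have hprod : ∀ X Y : Matrix (Fin r) (Fin r) (ZMod (p ^ 2)),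
      q.mapMatrix X = 0 → q.mapMatrix Y = 0 → X * Y = 0 := by
    intro X Y hX hY
    ext i j
    rw [Matrix.mul_apply, Matrix.zero_apply]
    refine Finset.sum_eq_zero fun k _ => ?_
    obtain ⟨a, ha⟩ := hker (X i k) (by
      have := congrFun (congrFun hX i) k
      simpa using this)
    obtain ⟨b, hb⟩ := hker (Y k j) (by
      have := congrFun (congrFun hY k) j
      simpa using this)
    rw [ha, hb]
    calc (p : ZMod (p ^ 2)) * a * ((p : ZMod (p ^ 2)) * b)
        = (p : ZMod (p ^ 2)) * (p : ZMod (p ^ 2)) * (a * b) := by ring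
      _ = 0 := by rw [hpp, zero_mul]
  -- p • X = 0 for kernel matrices
  have hsmul : ∀ X : Matrix (Fin r) (Fin r) (ZMod (p ^ 2)),
      q.mapMatrix X = 0 → (p : ZMod (p ^ 2)) • X = 0 := by
    intro X hX
    ext i j
    obtain ⟨a, ha⟩ := hker (X i j) (by
      have := congrFun (congrFun hX i) j
      simpa using this)
    simp only [Matrix.smul_apply, Matrix.zero_apply, smul_eq_mul, ha]
    rw [← mul_assoc, hpp, zero_mul]
  -- M^4 = 0
  have hM4 : M ^ 4 = 0 := by
    rw [show (4 : ℕ) = 2 + 2 from rfl, pow_add]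
    exact hprod _ _ (hqMk 2 le_rfl) (hqMk 2 le_rfl)
  -- A^p = 1, hence B^p = 1
  have hAp : (A : Matrix (Fin r) (Fin r) (ZMod (p ^ n))) ^ p = 1 := by
    have := pow_orderOf_eq_one A
    rw [horder] at this
    have := congrArg Units.val this
    simpa using this
  have hBp : B ^ p = 1 := by
    rw [hB, ← map_pow, hAp, map_one]
  -- binomial expansion of B^p = (M + 1)^p
  have hbin : B ^ p = ∑ m ∈ Finset.range (p + 1), M ^ m * ((p.choose m : ℕ) :
      Matrix (Fin r) (Fin r) (ZMod (p ^ 2))) := by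
    have hcomm : Commute M (1 : Matrix (Fin r) (Fin r) (ZMod (p ^ 2))) := Commute.one_right M
    have hBM : B = M + 1 := by rw [hM]; abel
    rw [hBM, hcomm.add_pow]
    refine Finset.sum_congr rfl fun m _ => ?_
    rw [one_pow, mul_one]
  -- general: multiplying by a natCast on the right is nsmul
  have hmulcast : ∀ (X : Matrix (Fin r) (Fin r) (ZMod (p ^ 2))) (c : ℕ),
      X * ((c : ℕ) : Matrix (Fin r) (Fin r) (ZMod (p ^ 2))) = c • X := by
    intro X c
    rw [← (Nat.cast_commute c X).eq, nsmul_eq_mul]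
  -- each term with 2 ≤ m ≤ p vanishes
  have hterm : ∀ m ∈ Finset.range (p + 1), M ^ m * ((p.choose m : ℕ) :
      Matrix (Fin r) (Fin r) (ZMod (p ^ 2))) =
      if m = 0 then 1 else if m = 1 then (p : ZMod (p ^ 2)) • M else 0 := by
    intro m hm
    rw [Finset.mem_range] at hm
    rcases Nat.lt_or_ge m 2 with h2 | h2
    · interval_cases m
      · simp
      · rw [if_neg one_ne_zero, if_pos rfl, pow_one, Nat.choose_one_right, hmulcast,
          Nat.cast_smul_eq_nsmul (ZMod (p ^ 2))]
    · rw [if_neg (by omega), if_neg (by omega), hmulcast]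
      rcases Nat.lt_or_ge m 4 with h4 | h4
      · have hdvd : p ∣ p.choose m := hp.dvd_choose_self (by omega) (by omega)
        obtain ⟨c, hc⟩ := hdvd
        have hz : (p : ZMod (p ^ 2)) • M ^ m = 0 := hsmul _ (hqMk m h2)
        rw [hc, mul_comm p c, mul_smul, ← Nat.cast_smul_eq_nsmul (ZMod (p ^ 2)) p, hz, smul_zero]
      · obtain ⟨k, rfl⟩ := Nat.exists_eq_add_of_le h4
        rw [pow_add, hM4, zero_mul, smul_zero]
  -- conclude B ^ p = 1 + p • M
  have hsum : B ^ p = 1 + (p : ZMod (p ^ 2)) • M := by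
    rw [hbin, Finset.sum_congr rfl hterm, Finset.sum_range_succ']
    rw [Finset.sum_eq_single 0
      (fun i _ hi => by rw [if_neg (by omega), if_neg (by omega)])
      (fun h => absurd (Finset.mem_range.mpr (by omega)) h)]
    norm_num
    abel
  have hpM : (p : ZMod (p ^ 2)) • M = 0 := by
    have h := hsum.symm.trans hBp
    -- 1 + p • M = 1
    exact (left_eq_add.mp h.symm)
  -- split M = E' + K
  set E' : Matrix (Fin r) (Fin r) (ZMod (p ^ 2)) := Matrix.single i0 ir (1 : ZMod (p ^ 2))
    with hE'
  have hqE' : q.mapMatrix E' = E := by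
    ext i j
    simp only [RingHom.mapMatrix_apply, Matrix.map_apply, hE', E, Matrix.single]
    simp only [Matrix.of_apply]
    split_ifs <;> simp
  have hqK : q.mapMatrix (M - E') = 0 := by
    rw [map_sub, hqM, hqE', sub_self]
  have hpK : (p : ZMod (p ^ 2)) • (M - E') = 0 := hsmul _ hqK
  have hpE' : (p : ZMod (p ^ 2)) • E' = 0 := by
    have : (p : ZMod (p ^ 2)) • E' = (p : ZMod (p ^ 2)) • M - (p : ZMod (p ^ 2)) • (M - E') := by
      rw [← smul_sub]; congr 1; abel
    rw [this, hpM, hpK, sub_zero]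
  -- look at entry (i0, ir)
  have hentry : (p : ZMod (p ^ 2)) = 0 := by
    have := congrFun (congrFun hpE' i0) ir
    simpa [hE', Matrix.single] using this
  have : p ^ 2 ∣ p := (ZMod.natCast_eq_zero_iff p (p ^ 2)).mp hentry
  have hle : p ^ 2 ≤ p := Nat.le_of_dvd hp.pos this
  nlinarith
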